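/- Let n ≥ 1, (μ, m) ∈ ℂⁿ × ℤⁿ and (η, δ) ∈ ℂ^{2n} × {0,1}^{2n} be subject to one of the following two sets of relations, for all l = 1,…,n: (A) η_{2l−1} = μ_l + |m_l|/2, η_{2l} = μ_l − |m_l|/2, δ_{2l−1} ≡ m_l + 1 (mod 2), δ_{2l} = 0; or (B) η_{2l−1} = μ_l + |m_l|/2, η_{2l} = μ_l − |m_l|/2, δ_{2l−1} ≡ m_l (mod 2), δ_{2l} = 1. Then, for every s ∈ ℂ such that 2(s − μ_l) ∉ ℤ for all l, one has iⁿ · ∏_{l=1}^n G_{m_l}(s − μ_l) = ∏_{k=1}^{2n} G_{δ_k}(s − η_k). -/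

import Mathlib

open scoped Real

/-- The gamma factor `G_δ(s) = i^δ · π^{1/2−s} · Γ((s+δ)/2)/Γ((1−s+δ)/2)` for `δ ∈ ℤ/2ℤ`. -/
noncomputable def Gdelta (δ : ZMod 2) (s : ℂ) : ℂ :=
  Complex.I ^ (δ.val) * (π : ℂ) ^ ((1 : ℂ) / 2 - s) *
    Complex.Gamma ((s + (δ.val : ℂ)) / 2) / Complex.Gamma ((1 - s + (δ.val : ℂ)) / 2)

/-- The gamma factor `G_m(s) = i^{|m|} · (2π)^{1−2s} · Γ(s+|m|/2)/Γ(1−s+|m|/2)` for `m ∈ ℤ`. -/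
noncomputable def Gm (m : ℤ) (s : ℂ) : ℂ :=
  Complex.I ^ (m.natAbs) * (2 * (π : ℂ)) ^ (1 - 2 * s) *
    Complex.Gamma (s + (m.natAbs : ℂ) / 2) / Complex.Gamma (1 - s + (m.natAbs : ℂ) / 2)

namespace Stmt2Aux


lemma pi_ne : ((π : ℝ) : ℂ) ≠ 0 := Complex.ofReal_ne_zero.mpr Real.pi_ne_zero

lemma two_pi_ne : (2 * (π : ℂ)) ≠ 0 := by
  simp [Real.pi_ne_zero]

lemma zne {z : ℂ} (hz : ∀ k : ℤ, 2 * z ≠ (k : ℂ)) (k : ℤ) : z ≠ (k : ℂ) :=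
  fun h => hz (2 * k) (by rw [h]; push_cast; ring)

lemma zne_nat {z : ℂ} (hz : ∀ k : ℤ, 2 * z ≠ (k : ℂ)) (n : ℕ) : z ≠ -(n : ℂ) :=
  fun h => hz (-(2 * n)) (by rw [h]; push_cast; ring)

lemma zne_nat' {z : ℂ} (hz : ∀ k : ℤ, 2 * z ≠ (k : ℂ)) (n : ℕ) : z ≠ -(2 * (n : ℂ) + 1) :=
  fun h => hz (-(4 * n + 2)) (by rw [h]; push_cast; ring)

lemma Gc_ne {z : ℂ} (hz : ∀ k : ℤ, 2 * z ≠ (k : ℂ)) : Complex.Gammaℂ z ≠ 0 := by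
  rw [Complex.Gammaℂ_def]
  refine mul_ne_zero (mul_ne_zero two_ne_zero ?_) (Complex.Gamma_ne_zero fun n => zne_nat hz n)
  simp [Complex.cpow_eq_zero_iff, Real.pi_ne_zero]

lemma sin_ne {z : ℂ} (hz : ∀ k : ℤ, 2 * z ≠ (k : ℂ)) : Complex.sin ((π : ℂ) * z) ≠ 0 := by
  rw [Ne, Complex.sin_eq_zero_iff]
  push_neg
  intro k h
  exact zne hz k (mul_left_cancel₀ pi_ne (by rw [h]; ring))

lemma Gc_reflect (z : ℂ) :
    Complex.Gammaℂ z * Complex.Gammaℂ (1 - z) = 2 / Complex.sin ((π : ℂ) * z) := by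
  rw [Complex.Gammaℂ_def, Complex.Gammaℂ_def]
  have h1 : (2 * (π:ℂ)) ^ (-z) * (2 * (π:ℂ)) ^ (-(1 - z)) = (2 * (π:ℂ))⁻¹ := by
    rw [← Complex.cpow_add _ _ two_pi_ne, show -z + -(1 - z) = -1 by ring, Complex.cpow_neg_one]
  calc 2 * (2 * (π:ℂ)) ^ (-z) * Complex.Gamma z * (2 * (2 * (π:ℂ)) ^ (-(1 - z)) *
        Complex.Gamma (1 - z))
      = 4 * ((2 * (π:ℂ)) ^ (-z) * (2 * (π:ℂ)) ^ (-(1 - z))) *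
        (Complex.Gamma z * Complex.Gamma (1 - z)) := by ring
    _ = 4 * (2 * (π:ℂ))⁻¹ * ((π:ℂ) / Complex.sin ((π:ℂ) * z)) := by
        rw [h1, Complex.Gamma_mul_Gamma_one_sub]
    _ = 2 / Complex.sin ((π : ℂ) * z) := by
        rw [div_eq_mul_inv, div_eq_mul_inv, ← mul_assoc]
        congr 1
        rw [mul_inv]
        field_simp [pi_ne]
        ring


lemma Gdelta_zero {z : ℂ} (hz : ∀ k : ℤ, 2 * z ≠ (k : ℂ)) :
    Gdelta 0 z = Complex.Gammaℂ z * Complex.cos ((π : ℂ) * z / 2) := by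
  rw [← Complex.Gammaℝ_div_Gammaℝ_one_sub (fun n => zne_nat' hz n)]
  rw [Gdelta, Complex.Gammaℝ_def, Complex.Gammaℝ_def]
  rw [show (0 : ZMod 2).val = 0 from rfl]
  push_cast
  rw [pow_zero, one_mul, add_zero, add_zero, mul_div_mul_comm,
    ← Complex.cpow_sub _ _ pi_ne, show -z / 2 - -(1 - z) / 2 = 1 / 2 - z by ring, mul_div_assoc]

lemma Gdelta_one {z : ℂ} (hz : ∀ k : ℤ, 2 * z ≠ (k : ℂ)) :
    Gdelta 1 z = Complex.I * (Complex.Gammaℂ z * Complex.sin ((π : ℂ) * z / 2)) := by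
  have hne : Complex.Gammaℝ (z + 1) ≠ 0 := by
    rw [Ne, Complex.Gammaℝ_eq_zero_iff]
    push_neg
    intro n h
    exact absurd (by rw [eq_sub_of_add_eq h]; push_cast; ring :
      2 * z = ((-(4 * n) - 2 : ℤ) : ℂ)) (hz _)
  have hkey := Complex.inv_Gammaℝ_two_sub (s := z) (fun n => zne_nat hz n)
  have h1 : Gdelta 1 z = Complex.I * (Complex.Gammaℝ (z + 1) * (Complex.Gammaℝ (2 - z))⁻¹) := by
    rw [Gdelta, Complex.Gammaℝ_def, Complex.Gammaℝ_def]
    rw [show (1 : ZMod 2).val = 1 from rfl]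
    push_cast
    rw [pow_one, show (1 - z + 1) / 2 = (2 - z) / 2 by ring, mul_inv, ← Complex.cpow_neg,
      show -(-(2 - z) / 2) = (2 - z) / 2 by ring]
    rw [div_eq_mul_inv, show Complex.I * ((π:ℂ) ^ (-(z + 1) / 2) * Complex.Gamma ((z + 1) / 2) *
      ((π:ℂ) ^ ((2 - z) / 2) * (Complex.Gamma ((2 - z) / 2))⁻¹)) =
      Complex.I * ((π:ℂ) ^ (-(z + 1) / 2) * (π:ℂ) ^ ((2 - z) / 2)) * Complex.Gamma ((z + 1) / 2) *
      (Complex.Gamma ((2 - z) / 2))⁻¹ by ring, ← Complex.cpow_add _ _ pi_ne,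
      show -(z + 1) / 2 + (2 - z) / 2 = 1 / 2 - z by ring]
  rw [h1, hkey]
  field_simp

lemma Gm_eq (m : ℤ) {a : ℂ} (ha : ∀ k : ℤ, 2 * a ≠ (k : ℂ)) :
    Gm m a = Complex.I ^ m.natAbs * (Complex.Gammaℂ (a + (m.natAbs : ℂ) / 2) *
      (Complex.Gammaℂ (a - (m.natAbs : ℂ) / 2) *
        Complex.sin ((π : ℂ) * (a - (m.natAbs : ℂ) / 2)) / 2)) := by
  set M := m.natAbs with hM
  set z1 := a - (M : ℂ) / 2 with hz1def
  have hz1 : ∀ k : ℤ, 2 * z1 ≠ (k : ℂ) := fun k h =>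
    ha (k + M) (by push_cast; rw [hz1def] at h; linear_combination h)
  have hz1' : ∀ k : ℤ, 2 * (1 - z1) ≠ (k : ℂ) := fun k h =>
    hz1 (2 - k) (by push_cast; linear_combination -h)
  have hsin : Complex.sin ((π : ℂ) * z1) ≠ 0 := sin_ne hz1
  have h2 : Complex.Gammaℂ z1 * Complex.sin ((π : ℂ) * z1) / 2 =
      (Complex.Gammaℂ (1 - z1))⁻¹ := by
    have hrefl := Gc_reflect z1
    have hG1 : Complex.Gammaℂ (1 - z1) ≠ 0 := Gc_ne hz1'
    field_simp
    field_simp at hrefl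
    rw [mul_comm z1] at hrefl; rw [mul_right_comm, hrefl, div_mul_cancel₀ _ hsin]
  rw [h2]
  have h1z : 1 - z1 = 1 - a + (M : ℂ) / 2 := by rw [hz1def]; ring
  rw [h1z, Gm, ← hM, Complex.Gammaℂ_def, Complex.Gammaℂ_def]
  simp only [mul_inv, Complex.cpow_neg, inv_inv]
  rw [show (1 : ℂ) - 2 * a = (1 - a + (M:ℂ)/2) - (a + (M:ℂ)/2) by ring,
    Complex.cpow_sub _ _ two_pi_ne, div_eq_mul_inv, div_eq_mul_inv]
  ring


lemma cos_add_nat (x : ℂ) (t : ℕ) :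
    Complex.cos (x + t * (π : ℂ)) = (-1) ^ t * Complex.cos x := by
  induction t with
  | zero => simp
  | succ t ih =>
    rw [show x + ((t + 1 : ℕ) : ℂ) * (π : ℂ) = (x + t * π) + π by push_cast; ring,
      Complex.cos_add_pi, ih]
    push_cast
    ring

lemma sin_add_nat (x : ℂ) (t : ℕ) :
    Complex.sin (x + t * (π : ℂ)) = (-1) ^ t * Complex.sin x := by
  induction t with
  | zero => simp
  | succ t ih =>
    rw [show x + ((t + 1 : ℕ) : ℂ) * (π : ℂ) = (x + t * π) + π by push_cast; ring,
      Complex.sin_add_pi, ih]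
    push_cast
    ring

lemma cos_add_half (x : ℂ) : Complex.cos (x + (π : ℂ) / 2) = -Complex.sin x := by
  rw [Complex.cos_add, Complex.cos_pi_div_two, Complex.sin_pi_div_two]
  ring

lemma key (m : ℤ) (a : ℂ) (ha : ∀ k : ℤ, 2 * a ≠ (k : ℂ)) (δ1 δ2 : ZMod 2)
    (hδ : (δ1 = (m : ZMod 2) + 1 ∧ δ2 = 0) ∨ (δ1 = (m : ZMod 2) ∧ δ2 = 1)) :
    Complex.I * Gm m a =
      Gdelta δ1 (a - (m.natAbs : ℂ) / 2) * Gdelta δ2 (a + (m.natAbs : ℂ) / 2) := by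
  set M := m.natAbs with hM
  have hz1 : ∀ k : ℤ, 2 * (a - (M : ℂ) / 2) ≠ (k : ℂ) := fun k h =>
    ha (k + M) (by push_cast; linear_combination h)
  have hz2 : ∀ k : ℤ, 2 * (a + (M : ℂ) / 2) ≠ (k : ℂ) := fun k h =>
    ha (k - M) (by push_cast; linear_combination h)
  have hmz : (m : ZMod 2) = (M : ZMod 2) := by
    rcases Int.natAbs_eq m with h | h
    · rw [← hM] at h; rw [h, Int.cast_natCast]
    · rw [← hM] at h; rw [h, Int.cast_neg, Int.cast_natCast, CharTwo.neg_eq]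
  rw [Gm_eq m ha, ← hM]
  rcases Nat.even_or_odd M with ⟨t, ht⟩ | ⟨t, ht⟩
  · -- M = t + t (even)
    have hm0 : (m : ZMod 2) = 0 := by
      rw [hmz, ht]; push_cast; rw [← two_mul, show (2 : ZMod 2) = 0 by decide]; ring
    have hMc : (M : ℂ) = 2 * t := by rw [ht]; push_cast; ring
    have hIc : Complex.I ^ M = (-1 : ℂ) ^ t := by
      rw [ht, ← two_mul, pow_mul, Complex.I_sq]
    have e2 : (π : ℂ) * (a + (M : ℂ) / 2) / 2 = (π : ℂ) * (a - (M : ℂ) / 2) / 2 + t * π := by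
      rw [hMc]; ring
    have e1 : Complex.sin ((π : ℂ) * (a - (M : ℂ) / 2)) =
        2 * Complex.sin ((π : ℂ) * (a - (M : ℂ) / 2) / 2) *
          Complex.cos ((π : ℂ) * (a - (M : ℂ) / 2) / 2) := by
      have e1' := Complex.sin_two_mul ((π : ℂ) * (a - (M : ℂ) / 2) / 2)
      rwa [show 2 * ((π : ℂ) * (a - (M : ℂ) / 2) / 2) = (π : ℂ) * (a - (M : ℂ) / 2) by ring]
        at e1'
    rcases hδ with ⟨h1, h2⟩ | ⟨h1, h2⟩
    · rw [h1, h2, hm0, zero_add, Gdelta_one hz1, Gdelta_zero hz2, e2, cos_add_nat, hIc, e1]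
      ring
    · rw [h1, h2, hm0, Gdelta_zero hz1, Gdelta_one hz2, e2, sin_add_nat, hIc, e1]
      ring
  · -- M = 2t + 1 (odd)
    have hm1 : (m : ZMod 2) = 1 := by
      rw [hmz, ht]; push_cast; rw [show (2 : ZMod 2) = 0 by decide]; ring
    have hMc : (M : ℂ) = 2 * t + 1 := by rw [ht]; push_cast; ring
    have hIc : Complex.I ^ M = (-1 : ℂ) ^ t * Complex.I := by
      rw [ht, pow_succ, pow_mul, Complex.I_sq]
    have e2 : (π : ℂ) * (a + (M : ℂ) / 2) / 2 =
        ((π : ℂ) * (a - (M : ℂ) / 2) / 2 + π / 2) + t * π := by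
      rw [hMc]; ring
    have e1 : Complex.sin ((π : ℂ) * (a - (M : ℂ) / 2)) =
        2 * Complex.sin ((π : ℂ) * (a - (M : ℂ) / 2) / 2) *
          Complex.cos ((π : ℂ) * (a - (M : ℂ) / 2) / 2) := by
      have e1' := Complex.sin_two_mul ((π : ℂ) * (a - (M : ℂ) / 2) / 2)
      rwa [show 2 * ((π : ℂ) * (a - (M : ℂ) / 2) / 2) = (π : ℂ) * (a - (M : ℂ) / 2) by ring]
        at e1'
    rcases hδ with ⟨h1, h2⟩ | ⟨h1, h2⟩
    · rw [h1, h2, hm1, show (1 : ZMod 2) + 1 = 0 by decide, Gdelta_zero hz1, Gdelta_zero hz2,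
        e2, cos_add_nat, cos_add_half, hIc, e1]
      linear_combination ((-1 : ℂ) ^ t * Complex.Gammaℂ (a + (M : ℂ) / 2) *
        Complex.Gammaℂ (a - (M : ℂ) / 2) * Complex.sin ((π : ℂ) * (a - (M : ℂ) / 2) / 2) *
        Complex.cos ((π : ℂ) * (a - (M : ℂ) / 2) / 2)) * Complex.I_sq
    · rw [h1, h2, hm1, Gdelta_one hz1, Gdelta_one hz2, e2, sin_add_nat,
        Complex.sin_add_pi_div_two, hIc, e1]
      ring


lemma prod_range_two_mul {M : Type*} [CommMonoid M] (g : ℕ → M) (n : ℕ) :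
    ∏ i ∈ Finset.range (2 * n), g i = ∏ i ∈ Finset.range n, (g (2 * i) * g (2 * i + 1)) := by
  induction n with
  | zero => simp
  | succ n ih =>
    rw [show 2 * (n + 1) = (2 * n + 1) + 1 by ring, Finset.prod_range_succ, Finset.prod_range_succ,
      ih, Finset.prod_range_succ, mul_assoc]


end Stmt2Aux

/-- If `(μ, m) ∈ ℂⁿ × ℤⁿ` and `(η, δ) ∈ ℂ^{2n} × (ℤ/2ℤ)^{2n}` are related by
either of the two listed sets of relations, then for every `s` with `2(s−μ_l) ∉ ℤ` for all `l`,
`iⁿ · ∏_l G_{m_l}(s − μ_l) = ∏_k G_{δ_k}(s − η_k)`. -/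
theorem stmt_2 (n : ℕ) (hn : 1 ≤ n) (μ : Fin n → ℂ) (m : Fin n → ℤ)
    (η : Fin (2 * n) → ℂ) (δ : Fin (2 * n) → ZMod 2)
    (hrel :
      (∀ l : Fin n,
          η ⟨2 * l.1, by have := l.2; omega⟩ = μ l + ((m l).natAbs : ℂ) / 2 ∧
          η ⟨2 * l.1 + 1, by have := l.2; omega⟩ = μ l - ((m l).natAbs : ℂ) / 2 ∧
          δ ⟨2 * l.1, by have := l.2; omega⟩ = (m l : ZMod 2) + 1 ∧
          δ ⟨2 * l.1 + 1, by have := l.2; omega⟩ = 0) ∨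
      (∀ l : Fin n,
          η ⟨2 * l.1, by have := l.2; omega⟩ = μ l + ((m l).natAbs : ℂ) / 2 ∧
          η ⟨2 * l.1 + 1, by have := l.2; omega⟩ = μ l - ((m l).natAbs : ℂ) / 2 ∧
          δ ⟨2 * l.1, by have := l.2; omega⟩ = (m l : ZMod 2) ∧
          δ ⟨2 * l.1 + 1, by have := l.2; omega⟩ = 1))
    (s : ℂ) (hs : ∀ l : Fin n, ∀ k : ℤ, 2 * (s - μ l) ≠ (k : ℂ)) :
    Complex.I ^ n * ∏ l, Gm (m l) (s - μ l) = ∏ k, Gdelta (δ k) (s - η k) := by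
  classical
  set F : Fin (2 * n) → ℂ := fun k => Gdelta (δ k) (s - η k) with hF
  set g : ℕ → ℂ := fun i => if h : i < 2 * n then F ⟨i, h⟩ else 1 with hg
  have hR : ∏ k, Gdelta (δ k) (s - η k) = ∏ i ∈ Finset.range (2 * n), g i := by
    rw [← Fin.prod_univ_eq_prod_range]
    refine Finset.prod_congr rfl fun k _ => ?_
    rw [hg]
    simp only [k.2, dif_pos, Fin.eta, hF]
  rw [hR, Stmt2Aux.prod_range_two_mul, ← Fin.prod_univ_eq_prod_range
    (fun i => g (2 * i) * g (2 * i + 1)) n]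
  have hL : ∏ l : Fin n, (Complex.I * Gm (m l) (s - μ l)) =
      Complex.I ^ n * ∏ l, Gm (m l) (s - μ l) := by
    rw [Finset.prod_mul_distrib, Finset.prod_const, Finset.card_univ, Fintype.card_fin]
  rw [← hL]
  have main : ∀ (l : Fin n),
      (η ⟨2 * l.1, by have := l.2; omega⟩ = μ l + ((m l).natAbs : ℂ) / 2 ∧
       η ⟨2 * l.1 + 1, by have := l.2; omega⟩ = μ l - ((m l).natAbs : ℂ) / 2 ∧
       ((δ ⟨2 * l.1, by have := l.2; omega⟩ = (m l : ZMod 2) + 1 ∧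
         δ ⟨2 * l.1 + 1, by have := l.2; omega⟩ = 0) ∨
        (δ ⟨2 * l.1, by have := l.2; omega⟩ = (m l : ZMod 2) ∧
         δ ⟨2 * l.1 + 1, by have := l.2; omega⟩ = 1))) →
      Complex.I * Gm (m l) (s - μ l) = g (2 * l.1) * g (2 * l.1 + 1) := by
    intro l ⟨e1, e2, hd⟩
    have h2 : 2 * l.1 < 2 * n := by have := l.2; omega
    have h3 : 2 * l.1 + 1 < 2 * n := by have := l.2; omega
    have hg1 : g (2 * l.1) = Gdelta (δ ⟨2 * l.1, h2⟩) ((s - μ l) - ((m l).natAbs : ℂ) / 2) := by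
      simp only [hg, dif_pos h2, hF]
      rw [e1, sub_add_eq_sub_sub]
    have hg2 : g (2 * l.1 + 1) =
        Gdelta (δ ⟨2 * l.1 + 1, h3⟩) ((s - μ l) + ((m l).natAbs : ℂ) / 2) := by
      simp only [hg, dif_pos h3, hF]
      rw [e2, show s - (μ l - ((m l).natAbs : ℂ) / 2) = s - μ l + ((m l).natAbs : ℂ) / 2
        by ring]
    rw [hg1, hg2]
    exact Stmt2Aux.key (m l) (s - μ l) (hs l) _ _ hd
  refine Finset.prod_congr rfl fun l _ => main l ?_
  rcases hrel with h | h
  · obtain ⟨e1, e2, e3, e4⟩ := h l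
    exact ⟨e1, e2, Or.inl ⟨e3, e4⟩⟩
  · obtain ⟨e1, e2, e3, e4⟩ := h l
    exact ⟨e1, e2, Or.inr ⟨e3, e4⟩⟩
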